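/- arXiv:2509.04540 — 5 statements merged into one kernel-verified Lean document; each statement's English description precedes it below -/
import Mathlib

section
/- If S is a symplectic transformation of a finite-dimensional symplectic vector space and −1 is a root of the characteristic polynomial of S, then it occurs with even multiplicity; likewise the root 1, if present, occurs with even multiplicity. -/
/-!
Let `t = ±1` and `N = S - t`. Since `S` preserves `ω`, its adjoint is `S⁻¹`, so
`ω u (N ^ k v) = ω ((S⁻¹ - t) ^ k u) v`, and `S⁻¹ - t = -t S⁻¹ N` because `t² = 1`. Hence the
generalized `t`-eigenspace `⨆ k, ker N ^ k` is `ω`-orthogonal to `⨅ k, range N ^ k`. By Fitting's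
lemma these two subspaces span `V`, so `ω` stays nondegenerate on the generalized eigenspace. A
nondegenerate alternating form lives on an even-dimensional space (an odd skew matrix has
determinant `0` when `2 ≠ 0`), and the dimension of the generalized eigenspace is the root
multiplicity of `t` in the characteristic polynomial.
-/

open Module

namespace LinearMap

variable {F V : Type*} [Field F] [AddCommGroup V] [Module F V]

lemma IsAdjointPair.pow {B : LinearMap.BilinForm F V} {f g : Module.End F V}
    (h : IsAdjointPair B B f g) (k : ℕ) : IsAdjointPair B B ⇑(f ^ k) ⇑(g ^ k) := by
  induction k with
  | zero => simpa using isAdjointPair_one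
  | succ k ih => rw [pow_succ, pow_succ']; exact ih.mul h

namespace BilinForm

variable {B : LinearMap.BilinForm F V}

lemma IsAlt.even_finrank [FiniteDimensional F V] (hB : B.IsAlt) (hnd : B.Nondegenerate)
    (h2 : (2 : F) ≠ 0) : Even (finrank F V) := by
  by_contra hodd
  let b := finBasis F V
  set A := B.toMatrix b
  have hskew : A.transpose = -A := by
    ext i j
    simp only [A, Matrix.transpose_apply, Matrix.neg_apply, toMatrix_apply, hB.neg_eq]
  have hdet : A.det = -A.det := by
    simpa [Matrix.det_neg, (Nat.not_even_iff_odd.mp hodd).neg_one_pow] using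
      congrArg Matrix.det hskew
  exact (nondegenerate_iff_det_ne_zero b).mp hnd
    (mul_left_cancel₀ h2 (by linear_combination hdet))

lemma nondegenerate_restrict_of_codisjoint (hB : B.IsRefl) (hnd : B.Nondegenerate)
    {U W : Submodule F V} (hUW : Codisjoint U W) (horth : ∀ u ∈ U, ∀ w ∈ W, B u w = 0) :
    (B.restrict U).Nondegenerate := by
  refine (IsRefl.nondegenerate_iff_separatingLeft (hB.domRestrict U)).mpr ?_
  rw [separatingLeft_iff_ker_eq_bot, ← restrict,
    ker_restrict_eq_of_codisjoint hUW horth, hnd.ker_eq_bot, Submodule.comap_bot,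
    Submodule.ker_subtype]

end BilinForm

variable {B : LinearMap.BilinForm F V} {S T : Module.End F V}

lemma IsOrthogonal.injective (hnd : B.Nondegenerate) (hS : B.IsOrthogonal S) :
    Function.Injective S :=
  (injective_iff_map_eq_zero S).mpr fun x hx ↦ hnd.1 x fun y ↦ by
    rw [← hS, hx, map_zero, zero_apply]

lemma IsOrthogonal.isAdjointPair_of_mul_eq_one (hS : B.IsOrthogonal S) (hST : S * T = 1) :
    IsAdjointPair B B T S := fun x y ↦ by
  rw [← hS, ← Module.End.mul_apply, hST, Module.End.one_apply]

lemma IsOrthogonal.apply_eq_zero_of_mem_maxGenEigenspace (hS : B.IsOrthogonal S)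
    (hTS : T * S = 1) (hST : S * T = 1) {t : F} (ht : t * t = 1) {u w : V}
    (hu : u ∈ S.maxGenEigenspace t) (hw : w ∈ ⨅ k, range ((S - t • 1) ^ k)) : B u w = 0 := by
  obtain ⟨k, hk⟩ := (Module.End.mem_maxGenEigenspace S t u).mp hu
  obtain ⟨v, rfl⟩ := (Submodule.mem_iInf _).mp hw k
  have hadj : IsAdjointPair B B ⇑(T - t • 1) ⇑(S - t • 1) :=
    (hS.isAdjointPair_of_mul_eq_one hST).sub (isAdjointPair_one.smul t)
  have hfactor : T - t • 1 = ((-t) • T) * (S - t • 1) := by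
    rw [mul_sub, smul_mul_assoc, hTS, mul_smul_comm, mul_one, smul_smul, mul_neg, ht]
    module
  have hcomm : Commute ((-t) • T) (S - t • 1) :=
    ((show Commute T S from hTS.trans hST.symm).sub_right
      ((Commute.one_right T).smul_right t)).smul_left (-t)
  rw [← hadj.pow k, hfactor, hcomm.mul_pow, Module.End.mul_apply, hk, map_zero, map_zero,
    zero_apply]

lemma codisjoint_maxGenEigenspace_iInf_range_pow [FiniteDimensional F V] (S : Module.End F V)
    (t : F) : Codisjoint (S.maxGenEigenspace t) (⨅ k, range ((S - t • 1) ^ k)) := by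
  simpa only [← Module.End.iSup_genEigenspace_eq, Module.End.genEigenspace_nat] using
    (isCompl_iSup_ker_pow_iInf_range_pow (S - t • 1)).codisjoint

theorem IsOrthogonal.even_rootMultiplicity_charpoly [FiniteDimensional F V] (hB : B.IsAlt)
    (hnd : B.Nondegenerate) (h2 : (2 : F) ≠ 0) (hS : B.IsOrthogonal S) {t : F}
    (ht : t * t = 1) : Even (S.charpoly.rootMultiplicity t) := by
  have hinj := hS.injective hnd
  have hrestrict : (B.restrict (S.maxGenEigenspace t)).Nondegenerate :=
    BilinForm.nondegenerate_restrict_of_codisjoint hB.isRefl hnd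
      (codisjoint_maxGenEigenspace_iInf_range_pow S t) fun _ hu _ hw ↦
        hS.apply_eq_zero_of_mem_maxGenEigenspace (LinearEquiv.ofInjectiveEndo_left_inv S hinj)
          (LinearEquiv.ofInjectiveEndo_right_inv S hinj) ht hu hw
  rw [← finrank_maxGenEigenspace_eq]
  exact BilinForm.IsAlt.even_finrank (fun x ↦ hB x) hrestrict h2

end LinearMap

theorem stmt2_general {F V : Type*} [Field F] [AddCommGroup V] [Module F V]
    [FiniteDimensional F V]
    (hchar : (2 : F) ≠ 0)
    (ω : LinearMap.BilinForm F V) (halt : ω.IsAlt) (hnd : ω.Nondegenerate)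
    (S : V →ₗ[F] V) (hS : ∀ v w : V, ω (S v) (S w) = ω v w) :
    Even ((LinearMap.charpoly S).rootMultiplicity (-1)) ∧
    Even ((LinearMap.charpoly S).rootMultiplicity 1) :=
  ⟨LinearMap.IsOrthogonal.even_rootMultiplicity_charpoly halt hnd hchar hS (by norm_num),
    LinearMap.IsOrthogonal.even_rootMultiplicity_charpoly halt hnd hchar hS (by norm_num)⟩

/-- The roots `1` and `-1` of the characteristic polynomial of a symplectic transformation
occur with even multiplicity. -/
theorem stmt2 {F V : Type*} [Field F] [AddCommGroup V] [Module F V]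
    [FiniteDimensional F V] (g : ℕ) (hdim : Module.finrank F V = 2 * g)
    (hchar : (2 : F) ≠ 0)
    (ω : LinearMap.BilinForm F V) (halt : ω.IsAlt) (hnd : ω.Nondegenerate)
    (S : V →ₗ[F] V) (hS : ∀ v w : V, ω (S v) (S w) = ω v w) :
    Even ((LinearMap.charpoly S).rootMultiplicity (-1)) ∧
    Even ((LinearMap.charpoly S).rootMultiplicity 1) :=
  stmt2_general hchar ω halt hnd S hS
end

section
/- For a symplectic transformation S of (V, ω) with characteristic polynomial splitting over F, the generalised eigenspace for eigenvalue λ = 1 (respectively λ = −1) is a symplectic subspace of V: the restriction of ω to it is non-degenerate. -/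
/-!
For `λ² = 1` put `T = λ - S`. Since `S` preserves `ω`, one has `ω (T v) (-λ S w) = ω v (T w)`,
and as `T` commutes with `-λ S` this iterates to `ω (Tᵏ v) ((-λ S)ᵏ w) = ω v (Tᵏ w)`. Hence the
generalised eigenspace `ker Tⁿ` is `ω`-orthogonal to `range Tⁿ`. By the Fitting decomposition
`V = ker Tⁿ ⊕ range Tⁿ` (`n = dim V`), so a vector of `ker Tⁿ` orthogonal to `ker Tⁿ` is orthogonal
to all of `V`, and vanishes by non-degeneracy.
-/

open Module

theorem Module.End.codisjoint_ker_pow_finrank_range_pow {K V : Type*} [Field K] [AddCommGroup V]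
    [Module K V] [FiniteDimensional K V] (f : End K V) :
    Codisjoint (LinearMap.ker (f ^ finrank K V)) (LinearMap.range (f ^ finrank K V)) := by
  obtain ⟨k, hk⟩ := Filter.eventually_atTop.mp f.eventually_codisjoint_ker_pow_range_pow
  exact (hk _ (le_max_left k (finrank K V))).mono
    (ker_pow_eq_ker_pow_finrank_of_le (le_max_right _ _)).le
    (f.iterateRange.monotone (le_max_right _ _))

namespace LinearMap.BilinForm

variable {R M : Type*} [CommRing R] [AddCommGroup M] [Module R M]

theorem apply_pow_apply_pow_eq_of_apply_apply_eq (ω : LinearMap.BilinForm R M) {T U : End R M}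
    (hTU : Commute T U) (h : ∀ v w, ω (T v) (U w) = ω v (T w)) (k : ℕ) (v w : M) :
    ω ((T ^ k) v) ((U ^ k) w) = ω v ((T ^ k) w) := by
  induction k generalizing w with
  | zero => simp
  | succ k ih =>
    calc ω ((T ^ (k + 1)) v) ((U ^ (k + 1)) w)
        = ω (T ((T ^ k) v)) (U ((U ^ k) w)) := by rw [pow_succ', pow_succ' U]; rfl
      _ = ω ((T ^ k) v) ((U ^ k) (T w)) := by
        rw [h, ← End.mul_apply, (hTU.pow_right k).eq]; rfl
      _ = ω v ((T ^ (k + 1)) w) := by rw [ih, pow_succ]; rfl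

theorem apply_smul_one_sub_apply_eq (ω : LinearMap.BilinForm R M) {S : End R M}
    (hS : ∀ v w, ω (S v) (S w) = ω v w) {lam : R} (hlam : lam * lam = 1) (v w : M) :
    ω ((lam • 1 - S) v) ((-lam • S) w) = ω v ((lam • 1 - S) w) := by
  simp only [LinearMap.sub_apply, LinearMap.smul_apply, End.one_apply, map_sub, map_smul, hS,
    smul_eq_mul]
  linear_combination -(ω v (S w)) * hlam

theorem apply_pow_eq_zero_of_mem_ker_pow (ω : LinearMap.BilinForm R M) {S : End R M}
    (hS : ∀ v w, ω (S v) (S w) = ω v w) {lam : R} (hlam : lam * lam = 1) (k : ℕ) {v : M}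
    (hv : v ∈ LinearMap.ker ((lam • 1 - S) ^ k)) (w : M) :
    ω v (((lam • 1 - S) ^ k) w) = 0 := by
  have hcomm : Commute (lam • 1 - S) (-lam • S) :=
    (((Commute.one_left S).smul_left lam).sub_left (Commute.refl S)).smul_right _
  rw [← apply_pow_apply_pow_eq_of_apply_apply_eq ω hcomm (apply_smul_one_sub_apply_eq ω hS hlam),
    LinearMap.mem_ker.mp hv, LinearMap.map_zero₂]

end LinearMap.BilinForm

theorem stmt5_general {F V : Type*} [Field F] [AddCommGroup V] [Module F V]
    [FiniteDimensional F V]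
    (ω : LinearMap.BilinForm F V) (hnd : ω.Nondegenerate)
    (S : Module.End F V) (hS : ∀ v w : V, ω (S v) (S w) = ω v w)
    (lam : F) (hlam : lam = 1 ∨ lam = -1) :
    ∀ v ∈ LinearMap.ker ((lam • (1 : Module.End F V) - S) ^ Module.finrank F V),
      (∀ w ∈ LinearMap.ker ((lam • (1 : Module.End F V) - S) ^ Module.finrank F V),
        ω v w = 0) → v = 0 := by
  intro v hv hvw
  have hlam_sq : lam * lam = 1 := by rcases hlam with rfl | rfl <;> norm_num
  refine hnd.1 v fun u ↦ ?_
  have hu : u ∈ LinearMap.ker ((lam • 1 - S) ^ finrank F V) ⊔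
      LinearMap.range ((lam • 1 - S) ^ finrank F V) :=
    (lam • 1 - S).codisjoint_ker_pow_finrank_range_pow.eq_top ▸ Submodule.mem_top
  obtain ⟨a, ha, _, ⟨b, rfl⟩, rfl⟩ := Submodule.mem_sup.mp hu
  rw [map_add, hvw a ha, ω.apply_pow_eq_zero_of_mem_ker_pow hS hlam_sq _ hv, add_zero]

/-- For a symplectic transformation with split characteristic polynomial, the generalised
eigenspace for eigenvalue `λ = ±1` is a symplectic subspace: `ω` restricts non-degenerately. -/
theorem stmt5 {F V : Type*} [Field F] [AddCommGroup V] [Module F V]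
    [FiniteDimensional F V] (hchar : (2 : F) ≠ 0)
    (ω : LinearMap.BilinForm F V) (halt : ω.IsAlt) (hnd : ω.Nondegenerate)
    (S : Module.End F V) (hS : ∀ v w : V, ω (S v) (S w) = ω v w)
    (hsplit : Polynomial.Splits ((LinearMap.charpoly S).map (RingHom.id F)))
    (lam : F) (hlam : lam = 1 ∨ lam = -1) :
    ∀ v ∈ LinearMap.ker ((lam • (1 : Module.End F V) - S) ^ Module.finrank F V),
      (∀ w ∈ LinearMap.ker ((lam • (1 : Module.End F V) - S) ^ Module.finrank F V),
        ω v w = 0) → v = 0 :=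
  stmt5_general ω hnd S hS lam hlam
end

section
/- For a symplectic transformation S of (V, ω) whose characteristic polynomial splits completely, each generalised eigenspace S_λ with λ ≠ ±1 is an isotropic subspace of V. -/
/-! With `T = λ - S` and `U = μ - S`, expanding
`ω v w = ω (S v) (S w) = ω (λ v - T v) (μ w - U w)` gives `λ μ ω v w` plus terms in which `T v`
or `U w` replaces `v` or `w`; these vanish by induction on the nilpotency orders, so
`(1 - λ μ) ω v w = 0`. Taking `μ = λ` with `λ² ≠ 1` gives isotropy. -/

namespace LinearMap.BilinForm

variable {F V : Type*} [Field F] [AddCommGroup V] [Module F V]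

theorem apply_eq_zero_of_mem_ker_pow_of_mul_ne_one (ω : LinearMap.BilinForm F V)
    {S : Module.End F V} (hS : ∀ v w : V, ω (S v) (S w) = ω v w) {lam mu : F}
    (hlm : lam * mu ≠ 1) {m n : ℕ} {v w : V}
    (hv : v ∈ ker ((lam • (1 : Module.End F V) - S) ^ m))
    (hw : w ∈ ker ((mu • (1 : Module.End F V) - S) ^ n)) :
    ω v w = 0 := by
  set T := lam • (1 : Module.End F V) - S
  set U := mu • (1 : Module.End F V) - S
  induction m generalizing v n w with
  | zero => simp_all
  | succ m ihm =>
    induction n generalizing w with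
    | zero => simp_all
    | succ n ihn =>
      have hTv : T v ∈ ker (T ^ m) := by rwa [mem_ker, ← Module.End.mul_apply, ← pow_succ]
      have hUw : U w ∈ ker (U ^ n) := by rwa [mem_ker, ← Module.End.mul_apply, ← pow_succ]
      have h₁ : ω v (U w) = 0 := ihn hUw
      have h₂ : ω (T v) w = 0 := ihm hTv hw
      have h₃ : ω (T v) (U w) = 0 := ihm hTv hUw
      have key : ω v w = lam * mu * ω v w := by
        have hSv : S v = lam • v - T v := by simp [T]
        have hSw : S w = mu • w - U w := by simp [U]
        calc ω v w = ω (lam • v - T v) (mu • w - U w) := by rw [← hSv, ← hSw, hS]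
          _ = lam * mu * ω v w := by
            simp only [map_sub, map_smul, LinearMap.sub_apply, LinearMap.smul_apply, smul_eq_mul,
              h₁, h₂, h₃]
            ring
      have : (1 - lam * mu) * ω v w = 0 := by linear_combination key
      exact (mul_eq_zero.mp this).resolve_left (sub_ne_zero.mpr hlm.symm)

end LinearMap.BilinForm

theorem stmt6_general {F V : Type*} [Field F] [AddCommGroup V] [Module F V]
    (ω : LinearMap.BilinForm F V)
    (S : Module.End F V) (hS : ∀ v w : V, ω (S v) (S w) = ω v w)
    (lam : F) (h1 : lam ≠ 1) (hm1 : lam ≠ -1) :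
    ∀ v ∈ LinearMap.ker ((lam • (1 : Module.End F V) - S) ^ Module.finrank F V),
      ∀ w ∈ LinearMap.ker ((lam • (1 : Module.End F V) - S) ^ Module.finrank F V),
        ω v w = 0 := by
  have hlam : lam * lam ≠ 1 := fun h => (mul_self_eq_one_iff.mp h).elim h1 hm1
  intro v hv w hw
  exact ω.apply_eq_zero_of_mem_ker_pow_of_mul_ne_one hS hlam hv hw

/-- For a symplectic transformation with split characteristic polynomial, each generalised
eigenspace `S_λ` with `λ ≠ ±1` is isotropic. -/
theorem stmt6 {F V : Type*} [Field F] [AddCommGroup V] [Module F V]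
    [FiniteDimensional F V] (hchar : (2 : F) ≠ 0)
    (ω : LinearMap.BilinForm F V) (halt : ω.IsAlt) (hnd : ω.Nondegenerate)
    (S : Module.End F V) (hS : ∀ v w : V, ω (S v) (S w) = ω v w)
    (hsplit : Polynomial.Splits (LinearMap.charpoly S))
    (lam : F) (h1 : lam ≠ 1) (hm1 : lam ≠ -1) :
    ∀ v ∈ LinearMap.ker ((lam • (1 : Module.End F V) - S) ^ Module.finrank F V),
      ∀ w ∈ LinearMap.ker ((lam • (1 : Module.End F V) - S) ^ Module.finrank F V),
        ω v w = 0 :=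
  stmt6_general ω S hS lam h1 hm1
end

section
/- Let f(t) = t^{2n} + a₁t^{2n−1} + ⋯ + a_n t^n + ⋯ + a₁ t + 1 be a self-reciprocal monic polynomial over a field F of characteristic ≠ 2. Then there exists a matrix S ∈ Sp_{2n}(F) (preserving the standard symplectic form) with characteristic polynomial f. -/
/-!
Write `f(t) = tⁿ h(t + t⁻¹)` with `h` monic of degree `n`: subtracting `f(0) (t² + 1)ⁿ` from `f`
leaves `t` times a self-reciprocal polynomial of degree `2n - 2`. In `F[t]/(h)` with its power
basis, let `M` be the matrix of multiplication by `t` and `E` the Gram matrix of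
`(u, v) ↦ [t^(n-1)] (u v)`. Then `E` is symmetric, anti-triangular with ones on the
anti-diagonal, and `Mᵀ E = E M`, so `S = [[Mᵀ, -E], [E⁻¹, 0]]` is symplectic, and
`det (t - S) = det ((t² + 1) - t Mᵀ) = tⁿ h(t + t⁻¹) = f(t)`.
-/

open Polynomial Matrix

namespace Polynomial

variable {R : Type*} [CommRing R]

lemma natDegree_X_sq_add_one_pow_le (k : ℕ) : ((X ^ 2 + 1 : R[X]) ^ k).natDegree ≤ 2 * k := by
  compute_degree
  omega

lemma reflect_X_sq_add_one_pow (k : ℕ) :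
    ((X ^ 2 + 1 : R[X]) ^ k).reflect (2 * k) = (X ^ 2 + 1) ^ k := by
  induction k with
  | zero => simp
  | succ k ih =>
    rw [pow_succ, mul_add_one 2 k, reflect_mul _ _ (natDegree_X_sq_add_one_pow_le k)
      (by compute_degree), ih, reflect_add, reflect_monomial, reflect_one]
    norm_num [add_comm]

lemma exists_eq_X_mul_of_reflect_eq {N : ℕ} {p : R[X]} (hdeg : p.natDegree ≤ N + 2)
    (hp : p.reflect (N + 2) = p) (h0 : p.coeff 0 = 0) :
    ∃ q : R[X], q.natDegree ≤ N ∧ q.reflect N = q ∧ p = X * q := by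
  have hsymm : ∀ i, p.coeff (revAt (N + 2) i) = p.coeff i := fun i => by
    rw [← coeff_reflect, hp]
  have htop : p.coeff (N + 2) = 0 := by
    simpa [revAt_le] using (hsymm 0).trans h0
  refine ⟨p.divX, ?_, ?_, ?_⟩
  · refine natDegree_le_iff_coeff_eq_zero.2 fun i hi => ?_
    rw [coeff_divX]
    rcases (Nat.succ_le_of_lt hi).eq_or_lt with rfl | hi
    · exact htop
    · exact coeff_eq_zero_of_natDegree_lt (by omega)
  · ext i
    rw [coeff_reflect, coeff_divX, coeff_divX]
    by_cases hi : i ≤ N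
    · rw [revAt_le hi, ← hsymm (i + 1), revAt_le (by omega)]
      congr 1
      omega
    · rw [revAt_eq_self_of_lt (by omega)]
  · simpa [h0] using (X_mul_divX_add p).symm

-- `MvPolynomial.aeval ![X ^ 2 + 1, X] (h.homogenize n)` is `Xⁿ h(X + X⁻¹)`, denominators cleared.
theorem exists_eq_aeval_homogenize_of_reflect_eq (n : ℕ) {f : R[X]}
    (hdeg : f.natDegree ≤ 2 * n) (hf : f.reflect (2 * n) = f) :
    ∃ h : R[X], h.natDegree ≤ n ∧ h.coeff n = f.coeff 0 ∧
      f = MvPolynomial.aeval ![X ^ 2 + 1, X] (h.homogenize n) := by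
  induction n generalizing f with
  | zero =>
    refine ⟨C (f.coeff 0), by simp, by simp, ?_⟩
    simpa using eq_C_of_natDegree_le_zero hdeg
  | succ n ih =>
    set c := f.coeff 0
    obtain ⟨g, hgdeg, hgf, hfg⟩ := exists_eq_X_mul_of_reflect_eq (N := 2 * n)
      (p := f - C c * (X ^ 2 + 1) ^ (n + 1))
      ((natDegree_sub_le _ _).trans (max_le hdeg
        ((natDegree_C_mul_le _ _).trans (natDegree_X_sq_add_one_pow_le _))))
      (by rw [← mul_add_one, reflect_sub, reflect_C_mul, reflect_X_sq_add_one_pow, hf])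
      (by simp [c, coeff_zero_eq_eval_zero])
    obtain ⟨h, hhdeg, -, hgh⟩ := ih hgdeg hgf
    have hhom : h.homogenize (n + 1) = h.homogenize n * MvPolynomial.X 1 := by
      rw [← pow_one (MvPolynomial.X 1), ← homogenize_one, ← homogenize_mul h 1 hhdeg
        (natDegree_one.trans_le zero_le_one), mul_one]
    refine ⟨h + C c * X ^ (n + 1), ?_, ?_, ?_⟩
    · exact natDegree_add_le_of_degree_le (hhdeg.trans n.le_succ) (natDegree_C_mul_X_pow_le _ _)
    · simp [coeff_eq_zero_of_natDegree_lt (Nat.lt_succ_of_le hhdeg)]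
    · rw [homogenize_add, homogenize_C_mul, homogenize_X_pow le_rfl, hhom]
      simp only [map_add, map_mul, map_pow, MvPolynomial.aeval_X, MvPolynomial.aeval_C, ← hgh,
        cons_val_zero, cons_val_one, cons_val_fin_one, algebraMap_eq, tsub_self, pow_zero, mul_one]
      linear_combination hfg

end Polynomial

namespace Matrix

variable {R : Type*} [CommRing R] {ι : Type*} [Fintype ι] [DecidableEq ι]

noncomputable def homogeneousCharpoly (M : Matrix ι ι R) : MvPolynomial (Fin 2) R :=
  det ((MvPolynomial.X 0 : MvPolynomial (Fin 2) R) • (1 : Matrix ι ι (MvPolynomial (Fin 2) R)) -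
    (MvPolynomial.X 1 : MvPolynomial (Fin 2) R) • M.map MvPolynomial.C)

lemma isHomogeneous_homogeneousCharpoly (M : Matrix ι ι R) :
    M.homogeneousCharpoly.IsHomogeneous (Fintype.card ι) := by
  rw [homogeneousCharpoly, det_apply']
  refine MvPolynomial.IsHomogeneous.sum _ _ _ fun σ _ => ?_
  rw [← map_intCast (MvPolynomial.C : R →+* MvPolynomial (Fin 2) R), ← zero_add (Fintype.card ι),
    ← Finset.card_univ, Finset.card_eq_sum_ones]
  refine (MvPolynomial.isHomogeneous_C _ _).mul
    (MvPolynomial.IsHomogeneous.prod _ _ _ fun i _ => ?_)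
  by_cases hi : σ i = i
  · simpa [hi, mul_comm] using (MvPolynomial.isHomogeneous_X R 0).sub
      (MvPolynomial.isHomogeneous_C_mul_X (M i i) 1)
  · simpa [hi, mul_comm] using (MvPolynomial.isHomogeneous_C_mul_X (M (σ i) i) 1).neg

lemma aeval_homogeneousCharpoly {S : Type*} [CommRing S] [Algebra R S] (M : Matrix ι ι R)
    (a b : S) :
    MvPolynomial.aeval ![a, b] M.homogeneousCharpoly =
      det (a • 1 - b • M.map (algebraMap R S)) := by
  rw [homogeneousCharpoly, AlgHom.map_det]
  congr 1
  ext i j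
  by_cases hij : i = j <;> simp [hij]

lemma homogenize_charpoly (M : Matrix ι ι R) :
    M.charpoly.homogenize (Fintype.card ι) = M.homogeneousCharpoly := by
  refine homogenize_eq_of_isHomogeneous M.isHomogeneous_homogeneousCharpoly ?_
  rw [aeval_homogeneousCharpoly, charpoly, charmatrix]
  congr 1
  ext i j
  by_cases hij : i = j <;> simp [hij]

lemma det_fromBlocks_smul_one₂₂ [IsDomain R] (A B C : Matrix ι ι R) {d : R} (hd : d ≠ 0) :
    det (fromBlocks A B C (d • 1)) = det (d • A - B * C) := by
  have hcol : fromBlocks A B C (d • 1) * fromBlocks (d • 1) 0 (-C) 1 =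
      fromBlocks (d • A - B * C) B 0 (d • 1) := by
    simp only [fromBlocks_multiply, Matrix.mul_smul, Matrix.smul_mul, Matrix.mul_one,
      Matrix.one_mul, Matrix.mul_zero, Matrix.mul_neg, zero_add, add_neg_cancel, ← sub_eq_add_neg]
  refine mul_right_cancel₀ (pow_ne_zero (Fintype.card ι) hd) ?_
  have := congrArg det hcol
  rw [det_mul, det_fromBlocks_zero₁₂, det_fromBlocks_zero₂₁, det_smul, det_one] at this
  simpa using this

lemma charmatrix_eq_smul_one_sub (A : Matrix ι ι R) :
    charmatrix A = (X : R[X]) • 1 - A.map C := by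
  rw [charmatrix, scalar_apply, smul_one_eq_diagonal]
  rfl

lemma charpoly_fromBlocks_neg_inv_zero [IsDomain R] (A E : Matrix ι ι R) (hE : IsUnit E.det) :
    (fromBlocks A (-E) E⁻¹ 0).charpoly =
      MvPolynomial.aeval ![X ^ 2 + 1, X] (A.charpoly.homogenize (Fintype.card ι)) := by
  have hEE : E.map C * E⁻¹.map C = 1 := by
    rw [← Matrix.map_mul, mul_nonsing_inv E hE, Matrix.map_one _ (map_zero _) (map_one _)]
  rw [homogenize_charpoly, aeval_homogeneousCharpoly, charpoly, charmatrix_fromBlocks,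
    charmatrix_zero, scalar_apply, ← smul_one_eq_diagonal,
    det_fromBlocks_smul_one₂₂ _ _ _ X_ne_zero, charmatrix_eq_smul_one_sub]
  congr 1
  rw [Matrix.map_neg _ (map_neg C), neg_neg, Matrix.mul_neg, hEE, algebraMap_eq]
  module

lemma fromBlocks_neg_inv_zero_mem_symplecticGroup {A E : Matrix ι ι R} (hE : Eᵀ = E)
    (hEu : IsUnit E.det) (hAE : A * E = E * Aᵀ) :
    fromBlocks A (-E) E⁻¹ 0 ∈ symplecticGroup ι R := by
  rw [SymplecticGroup.mem_iff, J, fromBlocks_transpose, fromBlocks_multiply, fromBlocks_multiply]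
  simp [transpose_nonsing_inv, hE, hAE, mul_nonsing_inv E hEu, nonsing_inv_mul E hEu]

lemma isUnit_det_of_lt_rev_eq_zero {n : ℕ} {E : Matrix (Fin n) (Fin n) R}
    (hzero : ∀ i j, j < Fin.rev i → E i j = 0) (hone : ∀ i, E i (Fin.rev i) = 1) :
    IsUnit E.det := by
  have htri : (E.submatrix Fin.revPerm id).IsUpperTriangular := fun i j hji =>
    hzero _ _ (by simpa using hji)
  have hdet : (E.submatrix Fin.revPerm id).det = 1 :=
    (det_of_isUpperTriangular htri).trans
      (Finset.prod_eq_one fun i _ => by simpa using hone (Fin.rev i))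
  rw [det_permute] at hdet
  exact IsUnit.of_mul_eq_one_right _ hdet

end Matrix

section Gram

variable {R A : Type*} [CommRing R] [CommRing A] [Algebra R A] {ι : Type*} [Fintype ι]
  [DecidableEq ι]

lemma transpose_leftMulMatrix_mul_gram (b : Module.Basis ι R A) (ℓ : A →ₗ[R] R) (a : A) :
    (Algebra.leftMulMatrix b a)ᵀ * of (fun i j => ℓ (b i * b j)) =
      of (fun i j => ℓ (b i * b j)) * Algebra.leftMulMatrix b a := by
  have hexpand : ∀ x y : A, ∑ k, b.repr x k * ℓ (b k * y) = ℓ (x * y) := fun x y => by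
    conv_rhs => rw [← b.sum_repr x]
    simp only [Finset.sum_mul, smul_mul_assoc, map_sum, map_smul, smul_eq_mul]
  ext i j
  simp only [mul_apply, transpose_apply, of_apply, Algebra.leftMulMatrix_eq_repr_mul]
  rw [hexpand]
  simp_rw [mul_comm (ℓ (b i * b _)), mul_comm (b i)]
  rw [hexpand, mul_right_comm]

end Gram

lemma Polynomial.Monic.exists_charpoly_eq_symmetric_intertwiner {F : Type*} [Field F] {h : F[X]}
    (hm : h.Monic) :
    ∃ M E : Matrix (Fin h.natDegree) (Fin h.natDegree) F,
      M.charpoly = h ∧ Eᵀ = E ∧ IsUnit E.det ∧ Mᵀ * E = E * M := by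
  let pb := AdjoinRoot.powerBasis hm.ne_zero
  let ℓ : AdjoinRoot h →ₗ[F] F := (lcoeff F (h.natDegree - 1)).comp (AdjoinRoot.modByMonicHom hm)
  have hbasis : ∀ i : Fin h.natDegree, pb.basis i = AdjoinRoot.mk h (X ^ (i : ℕ)) := fun i => by
    rw [PowerBasis.coe_basis, AdjoinRoot.powerBasis_gen, map_pow, AdjoinRoot.mk_X]
  have hE : ∀ i j : Fin h.natDegree, (i : ℕ) + j < h.natDegree →
      ℓ (pb.basis i * pb.basis j) = if h.natDegree - 1 = (i : ℕ) + j then 1 else 0 := by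
    intro i j hij
    have hlt : (X ^ ((i : ℕ) + j) : F[X]).degree < h.degree := by
      rw [degree_X_pow, degree_eq_natDegree hm.ne_zero]
      exact_mod_cast hij
    rw [hbasis, hbasis, ← map_mul, ← pow_add, LinearMap.comp_apply, AdjoinRoot.modByMonicHom_mk,
      (modByMonic_eq_self_iff hm).2 hlt, lcoeff_apply, coeff_X_pow]
  refine ⟨Algebra.leftMulMatrix pb.basis pb.gen, of fun i j => ℓ (pb.basis i * pb.basis j), ?_, ?_,
    isUnit_det_of_lt_rev_eq_zero (fun i j hj => ?_) (fun i => ?_),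
    transpose_leftMulMatrix_mul_gram _ _ _⟩
  · exact (charpoly_leftMulMatrix pb).trans (AdjoinRoot.minpoly_powerBasis_gen_of_monic hm)
  · ext i j
    simp [mul_comm]
  · rw [Fin.lt_def, Fin.val_rev] at hj
    rw [of_apply, hE i j (by omega), if_neg (by omega)]
  · rw [of_apply, hE i _ (by rw [Fin.val_rev]; omega), if_pos (by rw [Fin.val_rev]; omega)]

theorem stmt16_general {F : Type*} [Field F] (n : ℕ)
    (f : Polynomial F) (hmonic : f.Monic) (hdeg : f.natDegree = 2 * n)
    (hselfrecip : f.reverse = f) :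
    ∃ S : Matrix (Fin n ⊕ Fin n) (Fin n ⊕ Fin n) F,
      S ∈ Matrix.symplecticGroup (Fin n) F ∧ S.charpoly = f := by
  have hf0 : f.coeff 0 = 1 := by rw [← hselfrecip, coeff_zero_reverse, hmonic.leadingCoeff]
  obtain ⟨h, hhdeg, hhn, hfh⟩ :=
    exists_eq_aeval_homogenize_of_reflect_eq n hdeg.le (by rwa [← hdeg])
  have hnat : h.natDegree = n :=
    natDegree_eq_of_le_of_coeff_ne_zero hhdeg (by rw [hhn, hf0]; exact one_ne_zero)
  have hmon : h.Monic := by rw [Monic, leadingCoeff, hnat, hhn, hf0]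
  subst hnat
  obtain ⟨M, E, hM, hE, hEu, hME⟩ := hmon.exists_charpoly_eq_symmetric_intertwiner
  refine ⟨fromBlocks Mᵀ (-E) E⁻¹ 0,
    fromBlocks_neg_inv_zero_mem_symplecticGroup hE hEu (by rw [transpose_transpose, hME]), ?_⟩
  rw [charpoly_fromBlocks_neg_inv_zero _ _ hEu, charpoly_transpose, hM, Fintype.card_fin, hfh]

/-- Every self-reciprocal monic polynomial of degree `2n` over a field of characteristic
`≠ 2` is the characteristic polynomial of a matrix in the symplectic group `Sp_{2n}(F)`. -/
theorem stmt16 {F : Type*} [Field F] (hchar : (2 : F) ≠ 0) (n : ℕ)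
    (f : Polynomial F) (hmonic : f.Monic) (hdeg : f.natDegree = 2 * n)
    (hselfrecip : f.reverse = f) :
    ∃ S : Matrix (Fin n ⊕ Fin n) (Fin n ⊕ Fin n) F,
      S ∈ Matrix.symplecticGroup (Fin n) F ∧ S.charpoly = f :=
  stmt16_general n f hmonic hdeg hselfrecip
end

section
/- If g is a semisimple symplectic transformation of a symplectic 𝔽_ℓ-vector space V and M is a g-invariant Lagrangian with g-invariant complement M′, then the set {x ∈ M′ : gx − x ∈ M + gM} equals the fixed-point subspace (M′)^g, whose cardinality is √|V^g|. -/
/-!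
Since `M` and `M'` are `g`-stable complements, `g x - x ∈ M` for `x ∈ M'` forces `g x = x`.
For the count, `ω` restricts to a perfect `g`-invariant pairing `M × M' → 𝔽_ℓ` because `M` is
Lagrangian. Under such a pairing the vectors of `M'` fixed by `g` annihilate `(g - 1) M`, so
`dim M'^g ≤ dim M^g`, and symmetrically; finally `V^g = M^g ⊕ M'^g`.
-/

open Module LinearMap Submodule

section

variable {k M N : Type*} [Field k] [AddCommGroup M] [Module k M] [AddCommGroup N] [Module k N]

theorem finrank_ker_sub_one_le_of_flip_injective [FiniteDimensional k M]
    (B : M →ₗ[k] N →ₗ[k] k) (f : End k M) (h : End k N)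
    (hB : ∀ x y, B (f x) (h y) = B x y) (hB_inj : Function.Injective B.flip) :
    finrank k (ker (h - 1)) ≤ finrank k (ker (f - 1)) := by
  have h_le : (ker (h - 1)).map B.flip ≤ (range (f - 1)).dualAnnihilator := by
    rintro _ ⟨y, hy, rfl⟩
    rw [SetLike.mem_coe, mem_ker, LinearMap.sub_apply, Module.End.one_apply, sub_eq_zero] at hy
    rw [mem_dualAnnihilator]
    rintro _ ⟨x, rfl⟩
    simp [← hB x y, hy]
  calc finrank k (ker (h - 1))
      = finrank k ((ker (h - 1)).map B.flip) :=
        (equivMapOfInjective _ hB_inj _).finrank_eq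
    _ ≤ finrank k (range (f - 1)).dualAnnihilator := finrank_mono h_le
    _ = finrank k (ker (f - 1)) := by
        have := Subspace.finrank_add_finrank_dualAnnihilator_eq (range (f - 1))
        have := finrank_range_add_finrank_ker (f - 1)
        omega

theorem finrank_ker_sub_one_eq_of_bijective [FiniteDimensional k M] [FiniteDimensional k N]
    (B : M →ₗ[k] N →ₗ[k] k) (f : End k M) (h : End k N)
    (hB : ∀ x y, B (f x) (h y) = B x y) (hB_bij : Function.Bijective B) :
    finrank k (ker (h - 1)) = finrank k (ker (f - 1)) :=
  le_antisymm
    (finrank_ker_sub_one_le_of_flip_injective B f h hB (flip_injective_iff₂.mpr hB_bij.2))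
    (finrank_ker_sub_one_le_of_flip_injective B.flip h f (fun y x => hB x y)
      (by rw [LinearMap.flip_flip]; exact hB_bij.1))

end

section

variable {k V : Type*} [Field k] [AddCommGroup V] [Module k V]

theorem finrank_ker_restrict_sub_one (f : End k V) {p : Submodule k V} (hp : ∀ x ∈ p, f x ∈ p) :
    finrank k (ker (f.restrict hp - 1)) = finrank k ↥(p ⊓ ker (f - 1)) := by
  have hp1 : ∀ x ∈ p, (f - 1) x ∈ p := fun x hx => sub_mem (hp x hx) hx
  have : f.restrict hp - 1 = (f - 1).restrict hp1 := by ext; simp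
  rw [this, ker_restrict, ← map_comap_subtype, finrank_map_subtype_eq]

theorem finrank_inf_ker_add_finrank_inf_ker_of_isCompl [FiniteDimensional k V] (f : End k V)
    {M M' : Submodule k V} (hMM' : IsCompl M M') (hM : ∀ x ∈ M, f x ∈ M)
    (hM' : ∀ x ∈ M', f x ∈ M') :
    finrank k ↥(M ⊓ ker f) + finrank k ↥(M' ⊓ ker f) = finrank k (ker f) := by
  have h_sup : (M ⊓ ker f) ⊔ (M' ⊓ ker f) = ker f := by
    refine le_antisymm (sup_le inf_le_right inf_le_right) fun x hx => ?_
    obtain ⟨m, hm, m', hm', rfl⟩ := mem_sup.mp (hMM'.sup_eq_top ▸ mem_top : x ∈ M ⊔ M')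
    have hfm : f m = -f m' := eq_neg_of_add_eq_zero_left (by simpa using hx)
    have h0 : f m = 0 := (disjoint_def.mp hMM'.disjoint) _ (hM m hm) (hfm ▸ neg_mem (hM' m' hm'))
    exact add_mem (mem_sup_left ⟨hm, h0⟩) (mem_sup_right ⟨hm', by simpa [h0] using hfm.symm⟩)
  have h_inf : (M ⊓ ker f) ⊓ (M' ⊓ ker f) = ⊥ :=
    eq_bot_iff.mpr (hMM'.inf_eq_bot ▸ inf_le_inf inf_le_left inf_le_left)
  have := finrank_sup_add_finrank_inf_eq (M ⊓ ker f) (M' ⊓ ker f)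
  rw [h_sup, h_inf, finrank_bot, add_zero] at this
  exact this.symm

theorem LinearMap.BilinForm.bijective_domRestrict₁₂_of_isCompl [FiniteDimensional k V]
    {ω : LinearMap.BilinForm k V}
    (hω : ω.SeparatingLeft) {M M' : Submodule k V} (hM : ∀ x ∈ M, ∀ y ∈ M, ω x y = 0)
    (hMM' : IsCompl M M') (hdim : finrank k M = finrank k M') :
    Function.Bijective (ω.domRestrict₁₂ M M') := by
  have h_inj : Function.Injective (ω.domRestrict₁₂ M M') := by
    rw [← ker_eq_bot, eq_bot_iff]
    intro x hx
    rw [mem_bot, Subtype.ext_iff, ZeroMemClass.coe_zero]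
    refine hω _ fun v => ?_
    obtain ⟨m, hm, m', hm', rfl⟩ := mem_sup.mp (hMM'.sup_eq_top ▸ mem_top : v ∈ M ⊔ M')
    rw [map_add, hM _ x.2 m hm, zero_add]
    exact congr($hx ⟨m', hm'⟩)
  refine ⟨h_inj, (injective_iff_surjective_of_finrank_eq_finrank ?_).mp h_inj⟩
  rw [Subspace.dual_finrank_eq, hdim]

end

theorem stmt18_general (ℓ : ℕ) [Fact (Nat.Prime ℓ)]
    {V : Type*} [AddCommGroup V] [Module (ZMod ℓ) V] [FiniteDimensional (ZMod ℓ) V]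
    (ω : LinearMap.BilinForm (ZMod ℓ) V) (hnd : ω.Nondegenerate)
    (g : Module.End (ZMod ℓ) V) (hg : ∀ v w : V, ω (g v) (g w) = ω v w)
    (M M' : Submodule (ZMod ℓ) V)
    (hiso : ∀ x ∈ M, ∀ y ∈ M, ω x y = 0)
    (hdim : 2 * Module.finrank (ZMod ℓ) M = Module.finrank (ZMod ℓ) V)
    (hgM : Submodule.map g M = M)
    (hcompl : IsCompl M M') (hgM' : Submodule.map g M' ≤ M') :
    {x : V | x ∈ M' ∧ g x - x ∈ M ⊔ Submodule.map g M} = {x : V | x ∈ M' ∧ g x = x} ∧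
    Nat.card ↥(M' ⊓ LinearMap.ker (g - 1)) ^ 2 = Nat.card ↥(LinearMap.ker (g - 1)) := by
  have hMg : ∀ x ∈ M, g x ∈ M := fun x hx => hgM ▸ mem_map_of_mem hx
  have hM'g : ∀ x ∈ M', g x ∈ M' := fun x hx => hgM' (mem_map_of_mem hx)
  refine ⟨?_, ?_⟩
  · ext x
    simp only [Set.mem_ofPred_eq, hgM, sup_idem, and_congr_right_iff, ← sub_eq_zero (a := g x)]
    exact fun hx => ⟨fun h => disjoint_def.mp hcompl.disjoint _ h (sub_mem (hM'g x hx) hx),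
      fun h => h ▸ zero_mem M⟩
  have hMM' : finrank (ZMod ℓ) M = finrank (ZMod ℓ) M' := by
    have := finrank_add_eq_of_isCompl hcompl
    omega
  have h_fix : finrank (ZMod ℓ) ↥(M' ⊓ ker (g - 1)) = finrank (ZMod ℓ) ↥(M ⊓ ker (g - 1)) := by
    rw [← finrank_ker_restrict_sub_one g hM'g, ← finrank_ker_restrict_sub_one g hMg]
    exact finrank_ker_sub_one_eq_of_bijective _ _ _ (fun x y => hg x y)
      (ω.bijective_domRestrict₁₂_of_isCompl hnd.1 hiso hcompl hMM')
  have h_split := finrank_inf_ker_add_finrank_inf_ker_of_isCompl (g - 1) hcompl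
    (fun x hx => sub_mem (hMg x hx) hx) (fun x hx => sub_mem (hM'g x hx) hx)
  rw [natCard_eq_pow_finrank (K := ZMod ℓ),
    natCard_eq_pow_finrank (K := ZMod ℓ) (V := ker (g - 1)), Nat.card_zmod, ← pow_mul]
  congr 1
  omega

/-- For `g` semisimple with `g`-invariant Lagrangian `M` and `g`-invariant complement `M'`,
the set `{x ∈ M' : gx − x ∈ M + gM}` equals the fixed-point set `(M')^g`, whose cardinality
is `√|V^g|`. -/
theorem stmt18 (ℓ : ℕ) [Fact (Nat.Prime ℓ)] (hodd : ℓ ≠ 2)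
    {V : Type*} [AddCommGroup V] [Module (ZMod ℓ) V] [FiniteDimensional (ZMod ℓ) V]
    (ω : LinearMap.BilinForm (ZMod ℓ) V) (halt : ω.IsAlt) (hnd : ω.Nondegenerate)
    (g : Module.End (ZMod ℓ) V) (hg : ∀ v w : V, ω (g v) (g w) = ω v w)
    (hss : g.IsSemisimple)
    (M M' : Submodule (ZMod ℓ) V)
    (hiso : ∀ x ∈ M, ∀ y ∈ M, ω x y = 0)
    (hdim : 2 * Module.finrank (ZMod ℓ) M = Module.finrank (ZMod ℓ) V)
    (hgM : Submodule.map g M = M)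
    (hcompl : IsCompl M M') (hgM' : Submodule.map g M' ≤ M') :
    {x : V | x ∈ M' ∧ g x - x ∈ M ⊔ Submodule.map g M} = {x : V | x ∈ M' ∧ g x = x} ∧
    Nat.card ↥(M' ⊓ LinearMap.ker (g - 1)) ^ 2 = Nat.card ↥(LinearMap.ker (g - 1)) :=
  stmt18_general ℓ ω hnd g hg M M' hiso hdim hgM hcompl hgM'
end
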